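/- arXiv:2007.03674 — 5 statements merged into one kernel-verified Lean document; each statement's English description precedes it below -/
import Mathlib

section
/- Let m ∈ (0,1) and define φ(s) = s^m/(m-1) for s ≥ 0. Then for all real numbers s, t with 0 ≤ t ≤ s and s > 0, one has φ(t) - φ(s) - φ'(s)(t - s) ≥ (m/2) · s^{m-2} · (s - t)^2. -/
open Real Set

/-- Bernoulli for negative exponent `m - 1 ∈ (-1, 0)` on `(0, 1]`. -/
lemma bern_neg (m : ℝ) (hm0 : 0 < m) (hm1 : m < 1) {u : ℝ} (hu0 : 0 < u) (hu1 : u ≤ 1) :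
    1 + (m - 1) * (u - 1) ≤ u ^ (m - 1) := by
  have h1 : (1 + (u - 1)) ^ (1 - m) ≤ 1 + (1 - m) * (u - 1) :=
    rpow_one_add_le_one_add_mul_self (by linarith) (by linarith) (by linarith)
  rw [show (1 : ℝ) + (u - 1) = u by ring] at h1
  set a : ℝ := (1 - m) * (u - 1) with ha
  have ha1 : -1 < a := by nlinarith
  have hpos : (0 : ℝ) < 1 + a := by linarith
  have hu1m : 0 < u ^ (1 - m) := rpow_pos_of_pos hu0 _
  have key : u ^ (m - 1) = (u ^ (1 - m))⁻¹ := by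
    rw [← rpow_neg hu0.le]; ring_nf
  rw [key]
  have h2 : (1 + a)⁻¹ ≤ (u ^ (1 - m))⁻¹ := inv_anti₀ hu1m h1
  have h3 : 1 - a ≤ (1 + a)⁻¹ := by
    rw [inv_eq_one_div, le_div_iff₀ hpos]; nlinarith [sq_nonneg a]
  nlinarith

/-- Tangent line inequality for the convex function `x ↦ x^(m-1)`. -/
lemma tangent_aux (m : ℝ) (hm0 : 0 < m) (hm1 : m < 1) {s x : ℝ} (hx : 0 < x) (hxs : x ≤ s) :
    s ^ (m - 1) + (m - 1) * s ^ (m - 2) * (x - s) ≤ x ^ (m - 1) := by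
  have hs : 0 < s := hx.trans_le hxs
  have hb := bern_neg m hm0 hm1 (u := x / s) (div_pos hx hs) ((div_le_one hs).2 hxs)
  have hdiv : (x / s) ^ (m - 1) = x ^ (m - 1) / s ^ (m - 1) :=
    div_rpow hx.le hs.le _
  rw [hdiv] at hb
  have hsp1 : 0 < s ^ (m - 1) := rpow_pos_of_pos hs _
  have hmul : s ^ (m - 2) * s = s ^ (m - 1) := by
    rw [← rpow_add_one hs.ne']; ring_nf
  have hb' := mul_le_mul_of_nonneg_right hb hsp1.le
  rw [div_mul_cancel₀ _ hsp1.ne'] at hb'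
  calc s ^ (m - 1) + (m - 1) * s ^ (m - 2) * (x - s)
      = (1 + (m - 1) * (x / s - 1)) * s ^ (m - 1) := by
        field_simp
        rw [← hmul]; ring
    _ ≤ x ^ (m - 1) := hb'

theorem stmt_2 (m : ℝ) (hm0 : 0 < m) (hm1 : m < 1) (s t : ℝ)
    (ht : 0 ≤ t) (hts : t ≤ s) (hs : 0 < s) :
    let φ : ℝ → ℝ := fun r => r ^ m / (m - 1)
    let φ' : ℝ → ℝ := fun r => m * r ^ (m - 1) / (m - 1)
    φ t - φ s - φ' s * (t - s) ≥ m / 2 * s ^ (m - 2) * (s - t) ^ 2 := by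
  intro φ φ'
  simp only [φ, φ']
  have hm1' : m - 1 ≠ 0 := by intro h; linarith
  rcases eq_or_lt_of_le ht with rfl | ht0
  · -- t = 0 case
    rw [Real.zero_rpow hm0.ne']
    have h1 : s ^ (m - 1) * s = s ^ m := by
      rw [← rpow_add_one hs.ne']; ring_nf
    have h2 : s ^ (m - 2) * s ^ (2 : ℕ) = s ^ m := by
      rw [← rpow_natCast s 2, ← rpow_add hs]; norm_num
    have hsm : 0 < s ^ m := rpow_pos_of_pos hs _
    have e0 : m * s ^ (m - 1) / (m - 1) * (0 - s) = -(m * s ^ m) / (m - 1) := by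
      rw [← h1]; ring
    have e1 : 0 / (m - 1) - s ^ m / (m - 1) - m * s ^ (m - 1) / (m - 1) * (0 - s) = s ^ m := by
      rw [e0]; field_simp; ring
    rw [ge_iff_le, e1, sub_zero, show m / 2 * s ^ (m - 2) * s ^ 2 = m / 2 * (s ^ (m - 2) * s ^ 2)
      from by ring, h2]
    nlinarith
  · -- t > 0 case
    set c : ℝ := m / 2 * s ^ (m - 2) with hc
    set f : ℝ → ℝ := fun x =>
      x ^ m / (m - 1) - s ^ m / (m - 1) - m * s ^ (m - 1) / (m - 1) * (x - s)
        - c * (s - x) ^ 2 with hf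
    set f' : ℝ → ℝ := fun x =>
      m * x ^ (m - 1) / (m - 1) - m * s ^ (m - 1) / (m - 1) + 2 * c * (s - x) with hf'
    have hderiv : ∀ x ∈ Icc t s, HasDerivAt f (f' x) x := by
      intro x hx
      have hx0 : 0 < x := ht0.trans_le hx.1
      have h1 : HasDerivAt (fun x : ℝ => x ^ m) (m * x ^ (m - 1)) x := by
        simpa using Real.hasDerivAt_rpow_const (p := m) (Or.inl hx0.ne')
      have h2 : HasDerivAt (fun x : ℝ => x ^ m / (m - 1) - s ^ m / (m - 1)
          - m * s ^ (m - 1) / (m - 1) * (x - s)) (m * x ^ (m - 1) / (m - 1)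
          - m * s ^ (m - 1) / (m - 1)) x := by
        have := ((h1.div_const (m - 1)).sub_const (s ^ m / (m - 1))).sub
          (((hasDerivAt_id x).sub_const s).const_mul (m * s ^ (m - 1) / (m - 1)))
        exact this.congr_deriv (by ring)
      have h4 : HasDerivAt (fun x : ℝ => s - x) (-1) x := by
        simpa using (hasDerivAt_id x).const_sub s
      have h3 : HasDerivAt (fun x : ℝ => c * (s - x) ^ 2) (-(2 * c * (s - x))) x := by
        have := (h4.pow 2).const_mul c
        exact this.congr_deriv (by push_cast; ring)
      have := h2.sub h3
      exact this.congr_deriv (by simp only [hf']; ring)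
    have hderivle : ∀ x ∈ Ioo t s, f' x ≤ 0 := by
      intro x hx
      have hx0 : 0 < x := ht0.trans hx.1
      have htan := tangent_aux m hm0 hm1 hx0 hx.2.le
      -- f' x = (m/(m-1)) * (x^(m-1) - s^(m-1) - (m-1)*s^(m-2)*(x-s))
      have hmm : m / (m - 1) < 0 := div_neg_of_pos_of_neg hm0 (by linarith)
      have hb : 0 ≤ x ^ (m - 1) - s ^ (m - 1) - (m - 1) * s ^ (m - 2) * (x - s) := by
        linarith
      have : f' x = m / (m - 1) *
          (x ^ (m - 1) - s ^ (m - 1) - (m - 1) * s ^ (m - 2) * (x - s)) := by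
        simp only [hf', hc]
        field_simp
        ring
      rw [this]
      exact mul_nonpos_of_nonpos_of_nonneg hmm.le hb
    have hcont : ContinuousOn f (Icc t s) := fun x hx =>
      (hderiv x hx).continuousAt.continuousWithinAt
    have hanti : AntitoneOn f (Icc t s) := by
      apply antitoneOn_of_deriv_nonpos (convex_Icc t s) hcont
      · intro x hx
        rw [interior_Icc] at hx
        exact ((hderiv x (Ioo_subset_Icc_self hx)).differentiableAt).differentiableWithinAt
      · intro x hx
        rw [interior_Icc] at hx
        rw [(hderiv x (Ioo_subset_Icc_self hx)).deriv]
        exact hderivle x hx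
    have hts' : f s ≤ f t := hanti ⟨le_refl t, hts⟩ ⟨hts, le_refl s⟩ hts
    have hfs : f s = 0 := by simp [hf]
    have : 0 ≤ f t := hfs ▸ hts'
    simp only [hf] at this
    linarith
end

section
/- Let d ≥ 1 and p > 1. For every nonnegative C¹ function f : ℝᵈ → ℝ with compact support, one has ( (d/(p+1)) ∫_{ℝᵈ} f^{p+1} dx )² ≤ ( ∫_{ℝᵈ} |∇f|² dx ) · ( ∫_{ℝᵈ} |x|² f^{2p} dx ). -/
open MeasureTheory

theorem stmt_5 (d : ℕ) (hd : 1 ≤ d) (p : ℝ) (hp : 1 < p)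
    (f : EuclideanSpace ℝ (Fin d) → ℝ) (hf0 : ∀ x, 0 ≤ f x)
    (hC1 : ContDiff ℝ 1 f) (hsupp : HasCompactSupport f) :
    ((d : ℝ) / (p + 1) * ∫ x, f x ^ (p + 1)) ^ 2 ≤
      (∫ x, ‖gradient f x‖ ^ 2) * ∫ x, ‖x‖ ^ 2 * f x ^ (2 * p) := by
  classical
  have hdf : Differentiable ℝ f := hC1.differentiable one_ne_zero
  have hfc : Continuous f := hC1.continuous
  have hq1 : (1:ℝ) ≤ p + 1 := by linarith
  have hq0 : (p:ℝ) + 1 ≠ 0 := by linarith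
  have hp0 : p ≠ 0 := by linarith
  -- derivative of g = f ^ (p+1)
  set g : EuclideanSpace ℝ (Fin d) → ℝ := fun x => f x ^ (p+1) with hgdef
  have hg' : ∀ x, HasFDerivAt g (((p+1) * f x ^ p) • fderiv ℝ f x) x := by
    intro x
    have h1 : HasDerivAt (fun y : ℝ => y ^ (p+1)) ((p+1) * f x ^ ((p+1) - 1)) (f x) :=
      Real.hasDerivAt_rpow_const (Or.inr hq1)
    have h2 := h1.comp_hasFDerivAt x (hdf x).hasFDerivAt
    have h3 : HasFDerivAt ((fun y : ℝ => y ^ (p+1)) ∘ f) (((p+1) * f x ^ p) • fderiv ℝ f x) x := by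
      simpa [add_sub_cancel_right] using h2
    exact h3
  have hgc : Continuous g := hfc.rpow_const (fun x => Or.inr (by linarith))
  have hgsupp : HasCompactSupport g :=
    hsupp.comp_left (g := fun y : ℝ => y ^ (p+1)) (Real.zero_rpow hq0)
  have hfpc : Continuous (fun x => f x ^ p) := hfc.rpow_const (fun x => Or.inr (by linarith))
  have hfpsupp : HasCompactSupport (fun x => f x ^ p) :=
    hsupp.comp_left (g := fun y : ℝ => y ^ p) (Real.zero_rpow hp0)
  have hDc : Continuous (fderiv ℝ f) := hC1.continuous_fderiv one_ne_zero
  have hDac : ∀ v, Continuous (fun x => fderiv ℝ f x v) :=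
    fun v => hDc.clm_apply continuous_const
  -- integration by parts in each coordinate
  have h2 : ∀ i : Fin d, Integrable (fun x : EuclideanSpace ℝ (Fin d) =>
      (x i) * ((((p+1) * f x ^ p) • fderiv ℝ f x) (EuclideanSpace.single i 1))) := by
    intro i
    apply Continuous.integrable_of_hasCompactSupport
    · exact ((EuclideanSpace.proj (𝕜 := ℝ) i).continuous).mul
        (((continuous_const.mul hfpc)).mul (hDac _))
    · apply HasCompactSupport.mul_left
      simp only [ContinuousLinearMap.smul_apply, smul_eq_mul]
      exact ((hsupp.fderiv ℝ).comp_left (g := fun L : _ →L[ℝ] ℝ =>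
        L (EuclideanSpace.single i 1)) rfl).mul_left
  have key : ∀ i : Fin d,
      ∫ x : EuclideanSpace ℝ (Fin d),
        (x i) * ((((p+1) * f x ^ p) • fderiv ℝ f x) (EuclideanSpace.single i 1))
      = - ∫ x : EuclideanSpace ℝ (Fin d), g x := by
    intro i
    have hφ : ∀ x : EuclideanSpace ℝ (Fin d),
        HasFDerivAt (fun y : EuclideanSpace ℝ (Fin d) => y i)
          (EuclideanSpace.proj (𝕜 := ℝ) i) x :=
      fun x => (EuclideanSpace.proj (𝕜 := ℝ) i).hasFDerivAt
    have h1 : Integrable (fun x : EuclideanSpace ℝ (Fin d) =>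
        ((EuclideanSpace.proj (𝕜 := ℝ) i) (EuclideanSpace.single i 1)) * g x) := by
      simpa using hgc.integrable_of_hasCompactSupport (μ := volume) hgsupp
    have h2 := h2 i
    have h3 : Integrable (fun x : EuclideanSpace ℝ (Fin d) => (x i) * g x) := by
      apply Continuous.integrable_of_hasCompactSupport
      · exact ((EuclideanSpace.proj (𝕜 := ℝ) i).continuous).mul hgc
      · exact hgsupp.mul_left
    have := integral_bilinear_hasFDerivAt_right_eq_neg_left_of_integrable
      (μ := (volume : Measure (EuclideanSpace ℝ (Fin d))))
      (B := ContinuousLinearMap.mul ℝ ℝ) (v := EuclideanSpace.single i 1)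
      (f := fun y : EuclideanSpace ℝ (Fin d) => y i)
      (f' := fun _ => EuclideanSpace.proj (𝕜 := ℝ) i)
      (g := g) (g' := fun x => ((p+1) * f x ^ p) • fderiv ℝ f x)
      h1 h2 h3 (fun x _ => hφ x) (fun x _ => hg' x)
    simpa [PiLp.proj_apply, EuclideanSpace.single_apply] using this
  have e1 : ∀ x : EuclideanSpace ℝ (Fin d), ((p+1) * f x ^ p) * fderiv ℝ f x x
      = ∑ i, (x i) * ((((p+1) * f x ^ p) • fderiv ℝ f x) (EuclideanSpace.single i 1)) := by
    intro x
    have hmap : ∑ i, (x i) * (((p+1) * f x ^ p) • fderiv ℝ f x) (EuclideanSpace.single i 1)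
        = (((p+1) * f x ^ p) • fderiv ℝ f x) (∑ i, (x i) • EuclideanSpace.single i 1) := by
      rw [map_sum]
      exact Finset.sum_congr rfl (fun i _ => by
        rw [ContinuousLinearMap.map_smul]; simp [smul_eq_mul])
    have hx : (∑ i, (x i) • EuclideanSpace.single i (1:ℝ)) = x := by
      have := (EuclideanSpace.basisFun (Fin d) ℝ).sum_repr x
      simpa [EuclideanSpace.basisFun_apply, EuclideanSpace.basisFun_repr] using this
    rw [hmap, hx]
    simp [smul_eq_mul]
  have keysum : ∫ x : EuclideanSpace ℝ (Fin d), ((p+1) * f x ^ p) * fderiv ℝ f x x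
      = -(d:ℝ) * ∫ x : EuclideanSpace ℝ (Fin d), g x := by
    calc ∫ x : EuclideanSpace ℝ (Fin d), ((p+1) * f x ^ p) * fderiv ℝ f x x
        = ∫ x : EuclideanSpace ℝ (Fin d), ∑ i,
            (x i) * ((((p+1) * f x ^ p) • fderiv ℝ f x) (EuclideanSpace.single i 1)) := by
          exact integral_congr_ae (Filter.Eventually.of_forall (fun x => e1 x))
      _ = ∑ i, ∫ x : EuclideanSpace ℝ (Fin d),
            (x i) * ((((p+1) * f x ^ p) • fderiv ℝ f x) (EuclideanSpace.single i 1)) :=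
          integral_finset_sum _ (fun i _ => h2 i)
      _ = ∑ _i : Fin d, (- ∫ x : EuclideanSpace ℝ (Fin d), g x) :=
          Finset.sum_congr rfl (fun i _ => key i)
      _ = -(d:ℝ) * ∫ x : EuclideanSpace ℝ (Fin d), g x := by
          simp [Finset.sum_const, Finset.card_univ, mul_comm]
  -- rewrite the key identity
  have key2 : (d:ℝ)/(p+1) * ∫ x : EuclideanSpace ℝ (Fin d), g x
      = ∫ x : EuclideanSpace ℝ (Fin d), -(f x ^ p * fderiv ℝ f x x) := by
    have hmul : ∫ x : EuclideanSpace ℝ (Fin d), ((p+1) * f x ^ p) * fderiv ℝ f x x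
        = (p+1) * ∫ x : EuclideanSpace ℝ (Fin d), f x ^ p * fderiv ℝ f x x := by
      simp_rw [mul_assoc]
      exact integral_const_mul _ _
    have h := keysum
    rw [hmul] at h
    rw [integral_neg]
    have : ∫ x : EuclideanSpace ℝ (Fin d), f x ^ p * fderiv ℝ f x x
        = -(d:ℝ) * (∫ x : EuclideanSpace ℝ (Fin d), g x) / (p+1) := by
      field_simp at h ⊢
      linarith [h]
    rw [this]
    field_simp
  -- pointwise bound using Cauchy-Schwarz for the inner product
  have hgradc : Continuous (gradient f) :=
    (InnerProductSpace.toDual ℝ (EuclideanSpace ℝ (Fin d))).symm.continuous.comp hDc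
  have hgradsupp : HasCompactSupport (gradient f) :=
    (hsupp.fderiv ℝ).comp_left
      (g := fun L => (InnerProductSpace.toDual ℝ (EuclideanSpace ℝ (Fin d))).symm L)
      (map_zero _)
  have hbound : ∀ x : EuclideanSpace ℝ (Fin d),
      -(f x ^ p * fderiv ℝ f x x) ≤ ‖gradient f x‖ * (‖x‖ * f x ^ p) := by
    intro x
    have hfd : fderiv ℝ f x x = (inner ℝ (gradient f x) x : ℝ) := by
      rw [gradient, ← InnerProductSpace.toDual_apply_apply, LinearIsometryEquiv.apply_symm_apply]
    calc -(f x ^ p * fderiv ℝ f x x) = f x ^ p * (-(inner ℝ (gradient f x) x : ℝ)) := by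
          rw [hfd]; ring
      _ ≤ f x ^ p * (‖gradient f x‖ * ‖x‖) :=
          mul_le_mul_of_nonneg_left
            ((neg_le_abs _).trans (abs_real_inner_le_norm _ _))
            (Real.rpow_nonneg (hf0 x) p)
      _ = ‖gradient f x‖ * (‖x‖ * f x ^ p) := by ring
  have hLHSint : Integrable (fun x : EuclideanSpace ℝ (Fin d) =>
      -(f x ^ p * fderiv ℝ f x x)) := by
    apply Integrable.neg
    apply Continuous.integrable_of_hasCompactSupport
    · exact hfpc.mul (hDc.clm_apply continuous_id)
    · exact hfpsupp.mul_right
  have hRHSint : Integrable (fun x : EuclideanSpace ℝ (Fin d) =>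
      ‖gradient f x‖ * (‖x‖ * f x ^ p)) := by
    apply Continuous.integrable_of_hasCompactSupport
    · exact hgradc.norm.mul (continuous_norm.mul hfpc)
    · exact (hfpsupp.mul_left).mul_left
  have hCle : (d:ℝ)/(p+1) * (∫ x : EuclideanSpace ℝ (Fin d), g x)
      ≤ ∫ x : EuclideanSpace ℝ (Fin d), ‖gradient f x‖ * (‖x‖ * f x ^ p) := by
    rw [key2]
    exact integral_mono hLHSint hRHSint hbound
  -- Hölder (Cauchy-Schwarz) for integrals
  have hconj : Real.HolderConjugate 2 2 := by constructor <;> norm_num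
  have hm1 : MemLp (fun x : EuclideanSpace ℝ (Fin d) => ‖gradient f x‖)
      (ENNReal.ofReal 2) volume :=
    hgradc.norm.memLp_of_hasCompactSupport (h'f := hgradsupp.norm)
  have hm2 : MemLp (fun x : EuclideanSpace ℝ (Fin d) => ‖x‖ * f x ^ p)
      (ENNReal.ofReal 2) volume :=
    (continuous_norm.mul hfpc).memLp_of_hasCompactSupport (h'f := hfpsupp.mul_left)
  have hhold := integral_mul_le_Lp_mul_Lq_of_nonneg hconj
    (Filter.Eventually.of_forall (fun x => norm_nonneg (gradient f x)))
    (Filter.Eventually.of_forall (fun x : EuclideanSpace ℝ (Fin d) =>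
      mul_nonneg (norm_nonneg x) (Real.rpow_nonneg (hf0 x) p)))
    hm1 hm2
  have hA : (∫ x : EuclideanSpace ℝ (Fin d), ‖gradient f x‖ ^ (2:ℝ))
      = ∫ x : EuclideanSpace ℝ (Fin d), ‖gradient f x‖ ^ 2 := by
    refine integral_congr_ae (Filter.Eventually.of_forall (fun x => ?_))
    show ‖gradient f x‖ ^ (2:ℝ) = ‖gradient f x‖ ^ (2:ℕ)
    rw [← Real.rpow_natCast (‖gradient f x‖) 2]
    norm_num
  have hB : (∫ x : EuclideanSpace ℝ (Fin d), (‖x‖ * f x ^ p) ^ (2:ℝ))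
      = ∫ x : EuclideanSpace ℝ (Fin d), ‖x‖ ^ 2 * f x ^ (2*p) := by
    refine integral_congr_ae (Filter.Eventually.of_forall (fun x => ?_))
    show (‖x‖ * f x ^ p) ^ (2:ℝ) = ‖x‖ ^ (2:ℕ) * f x ^ (2*p)
    rw [Real.mul_rpow (norm_nonneg x) (Real.rpow_nonneg (hf0 x) p),
      ← Real.rpow_mul (hf0 x), mul_comm p 2, ← Real.rpow_natCast ‖x‖ 2]
    norm_num [Real.rpow_natCast]
  rw [hA, hB] at hhold
  set A : ℝ := ∫ x : EuclideanSpace ℝ (Fin d), ‖gradient f x‖ ^ 2 with hAdef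
  set B : ℝ := ∫ x : EuclideanSpace ℝ (Fin d), ‖x‖ ^ 2 * f x ^ (2*p) with hBdef
  have hA0 : 0 ≤ A := integral_nonneg (fun x => sq_nonneg _)
  have hB0 : 0 ≤ B := integral_nonneg (fun x =>
    mul_nonneg (sq_nonneg _) (Real.rpow_nonneg (hf0 x) _))
  have hC0 : 0 ≤ (d:ℝ)/(p+1) * ∫ x : EuclideanSpace ℝ (Fin d), g x :=
    mul_nonneg (div_nonneg (Nat.cast_nonneg d) (by linarith))
      (integral_nonneg (fun x => Real.rpow_nonneg (hf0 x) _))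
  have hD : (d:ℝ)/(p+1) * (∫ x : EuclideanSpace ℝ (Fin d), g x)
      ≤ A ^ ((1:ℝ)/2) * B ^ ((1:ℝ)/2) := hCle.trans hhold
  calc ((d:ℝ)/(p+1) * ∫ x : EuclideanSpace ℝ (Fin d), g x) ^ 2
      ≤ (A ^ ((1:ℝ)/2) * B ^ ((1:ℝ)/2)) ^ 2 := pow_le_pow_left₀ hC0 hD 2
    _ = A * B := by
        rw [mul_pow, ← Real.rpow_natCast (A ^ ((1:ℝ)/2)) 2,
          ← Real.rpow_natCast (B ^ ((1:ℝ)/2)) 2,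
          ← Real.rpow_mul hA0, ← Real.rpow_mul hB0]
        norm_num
end

section
/- Let η > 0 and T > 0, and let Q : [0,T] → ℝ be a C¹ function satisfying Q(t) > 0, the differential inequality Q'(t) ≤ Q(t)(Q(t) - 4) for all t ∈ [0,T], and Q(T) ≥ 4 + η. Then for all t ∈ [0,T], Q(t) ≥ 4 + (4η e^{-4(T-t)}) / (4 + η - η e^{-4(T-t)}). -/
theorem stmt_10 (η T : ℝ) (hη : 0 < η) (hT : 0 < T)
    (Q Q' : ℝ → ℝ)
    (hpos : ∀ t ∈ Set.Icc (0 : ℝ) T, 0 < Q t)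
    (hderiv : ∀ t ∈ Set.Icc (0 : ℝ) T, HasDerivWithinAt Q (Q' t) (Set.Icc 0 T) t)
    (hineq : ∀ t ∈ Set.Icc (0 : ℝ) T, Q' t ≤ Q t * (Q t - 4))
    (hQT : 4 + η ≤ Q T) :
    ∀ t ∈ Set.Icc (0 : ℝ) T,
      4 + 4 * η * Real.exp (-4 * (T - t)) / (4 + η - η * Real.exp (-4 * (T - t)))
        ≤ Q t := by
  set g : ℝ → ℝ := fun s => Real.exp (-4 * s) * (1 - 4 / Q s) with hg
  have hQ' : ∀ x ∈ Set.Icc (0:ℝ) T, HasDerivWithinAt g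
      (-4 * Real.exp (-4 * x) * (1 - 4 / Q x)
        + Real.exp (-4 * x) * (4 * Q' x / Q x ^ 2)) (Set.Icc 0 T) x := by
    intro x hx
    have h1 : HasDerivWithinAt (fun s => Real.exp (-4 * s)) (-4 * Real.exp (-4 * x))
        (Set.Icc 0 T) x := by
      have hlin : HasDerivAt (fun s : ℝ => -4 * s) (-4 : ℝ) x := by
        simpa using (hasDerivAt_id x).const_mul (-4 : ℝ)
      have := (Real.hasDerivAt_exp (-4 * x)).comp x hlin
      simpa [Function.comp_def, mul_comm] using this.hasDerivWithinAt
    have hne : Q x ≠ 0 := (hpos x hx).ne'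
    have h2 : HasDerivWithinAt (fun s => 1 - 4 / Q s) (4 * Q' x / Q x ^ 2)
        (Set.Icc 0 T) x := by
      have hdiv := (hasDerivWithinAt_const x (Set.Icc (0:ℝ) T) (4:ℝ)).div (hderiv x hx) hne
      have h3 := (hasDerivWithinAt_const x (Set.Icc (0:ℝ) T) (1:ℝ)).sub hdiv
      refine h3.congr_deriv ?_
      ring
    have := h1.mul h2
    exact this
  have hcont : ContinuousOn g (Set.Icc 0 T) := fun x hx => (hQ' x hx).continuousWithinAt
  have hanti : AntitoneOn g (Set.Icc 0 T) := by
    have hdiff : ∀ x ∈ interior (Set.Icc (0:ℝ) T), HasDerivAt g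
        (-4 * Real.exp (-4 * x) * (1 - 4 / Q x)
          + Real.exp (-4 * x) * (4 * Q' x / Q x ^ 2)) x := by
      intro x hx
      rw [interior_Icc] at hx
      exact (hQ' x (Set.Ioo_subset_Icc_self hx)).hasDerivAt (Icc_mem_nhds hx.1 hx.2)
    apply antitoneOn_of_deriv_nonpos (convex_Icc 0 T) hcont
    · intro x hx
      exact ((hdiff x hx).differentiableAt).differentiableWithinAt
    · intro x hx
      rw [(hdiff x hx).deriv]
      rw [interior_Icc] at hx
      have hx' : x ∈ Set.Icc (0:ℝ) T := Set.Ioo_subset_Icc_self hx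
      have hq : 0 < Q x := hpos x hx'
      have he : 0 < Real.exp (-4 * x) := Real.exp_pos _
      have h4 : 4 * Q' x / Q x ^ 2 ≤ 4 * (1 - 4 / Q x) := by
        rw [div_le_iff₀ (by positivity)]
        have hmul : (4 * (1 - 4 / Q x)) * Q x ^ 2 = 4 * (Q x * (Q x - 4)) := by
          field_simp
        rw [hmul]
        have := hineq x hx'
        linarith
      have heq : -4 * Real.exp (-4 * x) * (1 - 4 / Q x)
          + Real.exp (-4 * x) * (4 * Q' x / Q x ^ 2)
          = Real.exp (-4 * x) * (4 * Q' x / Q x ^ 2 - 4 * (1 - 4 / Q x)) := by ring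
      rw [heq]
      exact mul_nonpos_of_nonneg_of_nonpos he.le (by linarith)
  intro t ht
  obtain ⟨ht0, htT⟩ := ht
  have hTmem : T ∈ Set.Icc (0:ℝ) T := ⟨hT.le, le_refl T⟩
  have hgle : g T ≤ g t := hanti ⟨ht0, htT⟩ hTmem htT
  set E := Real.exp (-4 * (T - t)) with hEdef
  have hE0 : 0 < E := Real.exp_pos _
  have hE1 : E ≤ 1 := by
    rw [hEdef]
    apply Real.exp_le_one_iff.mpr
    nlinarith
  have hq : 0 < Q t := hpos t ⟨ht0, htT⟩
  have hQT0 : 0 < Q T := hpos T hTmem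
  -- 1 - 4/Q T ≥ η/(4+η)
  have hwT : η / (4 + η) ≤ 1 - 4 / Q T := by
    have h1 : 4 / Q T ≤ 4 / (4 + η) := by
      apply div_le_div_of_nonneg_left (by norm_num) (by linarith) (by linarith)
    have h2 : 1 - 4 / (4 + η) = η / (4 + η) := by field_simp; ring
    linarith
  -- transfer via g
  have het : 0 < Real.exp (-4 * t) := Real.exp_pos _
  have heT : 0 < Real.exp (-4 * T) := Real.exp_pos _
  have hratio : Real.exp (-4 * T) = E * Real.exp (-4 * t) := by
    rw [hEdef, ← Real.exp_add]; ring_nf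
  have hkey : E * (η / (4 + η)) ≤ 1 - 4 / Q t := by
    have h1 : Real.exp (-4 * T) * (η / (4 + η)) ≤ Real.exp (-4 * t) * (1 - 4 / Q t) := by
      calc Real.exp (-4 * T) * (η / (4 + η))
          ≤ Real.exp (-4 * T) * (1 - 4 / Q T) := by
            exact mul_le_mul_of_nonneg_left hwT heT.le
        _ ≤ Real.exp (-4 * t) * (1 - 4 / Q t) := hgle
    rw [hratio] at h1
    have := (mul_le_mul_iff_right₀ het).mp (by linarith [h1] : Real.exp (-4 * t) * (E * (η / (4 + η))) ≤ Real.exp (-4 * t) * (1 - 4 / Q t))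
    exact this
  have hd : 0 < 4 + η - η * E := by nlinarith
  have h44 : 4 * (4 + η) ≤ Q t * (4 + η - η * E) := by
    have h1 : 4 / Q t ≤ 1 - E * (η / (4 + η)) := by linarith
    rw [div_le_iff₀ hq] at h1
    have h2 : 1 - E * (η / (4 + η)) = (4 + η - η * E) / (4 + η) := by
      field_simp
    rw [h2] at h1
    have h3 := mul_le_mul_of_nonneg_right h1 (show (0:ℝ) ≤ 4 + η by linarith)
    have h4 : (4 + η - η * E) / (4 + η) * Q t * (4 + η) = Q t * (4 + η - η * E) := by
      field_simp
    linarith [h4 ▸ h3]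
  have hfin : 4 + 4 * η * E / (4 + η - η * E) = 4 * (4 + η) / (4 + η - η * E) := by
    field_simp; ring
  rw [hfin, div_le_iff₀ hd]
  linarith
end

section
/- Let d ≥ 1, p ≥ 1, ν ∈ (0,1), and let u : ℝᵈ → ℝ be a function in L^p(ℝᵈ) whose ν-Hölder seminorm ⌊u⌋_{C^ν(ℝᵈ)} = sup_{x≠y} |u(x)-u(y)|/|x-y|^ν is finite. Then u is bounded and ‖u‖_{L^∞(ℝᵈ)} ≤ C_{d,ν,p} · ⌊u⌋_{C^ν(ℝᵈ)}^{d/(d+pν)} · ‖u‖_{L^p(ℝᵈ)}^{pν/(d+pν)}, where C_{d,ν,p} is an explicit constant depending only on d, ν, p. -/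
open MeasureTheory

theorem stmt_13 (d : ℕ) (hd : 1 ≤ d) (p ν : ℝ) (hp : 1 ≤ p)
    (hν0 : 0 < ν) (hν1 : ν < 1) :
    ∃ C : ℝ, 0 < C ∧
      ∀ (u : EuclideanSpace ℝ (Fin d) → ℝ) (H : ℝ), 0 ≤ H →
        (∀ x y, |u x - u y| ≤ H * ‖x - y‖ ^ ν) →
        Integrable (fun x => |u x| ^ p) →
        ∀ x, |u x| ≤ C * H ^ ((d : ℝ) / (d + p * ν)) *
          ((∫ y, |u y| ^ p) ^ (1 / p)) ^ (p * ν / (d + p * ν)) := by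
  have hp0 : (0:ℝ) < p := lt_of_lt_of_le one_pos hp
  haveI : Nontrivial (EuclideanSpace ℝ (Fin d)) :=
    Module.nontrivial_of_finrank_pos (R := ℝ)
      (by rw [finrank_euclideanSpace, Fintype.card_fin]; omega)
  set κ := (volume (Metric.ball (0 : EuclideanSpace ℝ (Fin d)) 1)).toReal with hκdef
  have hκpos : 0 < κ :=
    ENNReal.toReal_pos (Metric.measure_ball_pos volume 0 one_pos).ne' measure_ball_lt_top.ne
  refine ⟨1 + κ ^ (-(1/p)), by positivity, ?_⟩
  intro u H hH hHol hInt x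
  set I := ∫ y, |u y| ^ p with hIdef
  have hInn : 0 ≤ I := integral_nonneg fun y => Real.rpow_nonneg (abs_nonneg _) _
  set D := (d:ℝ) + p * ν with hDdef
  have hd0 : (0:ℝ) < (d:ℝ) := by exact_mod_cast hd
  have hD : 0 < D := by positivity
  -- key pointwise estimate for every radius ρ
  have key : ∀ ρ : ℝ, 0 < ρ → max (|u x| - H * ρ ^ ν) 0 ^ p * (ρ ^ d * κ) ≤ I := by
    intro ρ hρ
    set m := max (|u x| - H * ρ ^ ν) 0 with hm
    have hm0 : 0 ≤ m := le_max_right _ _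
    have hVol : (volume (Metric.ball x ρ)).toReal = ρ ^ d * κ := by
      rw [Measure.addHaar_ball volume x hρ.le, ENNReal.toReal_mul,
        ENNReal.toReal_ofReal (by positivity), finrank_euclideanSpace, Fintype.card_fin]
    have hlow : ∀ y ∈ Metric.ball x ρ, m ^ p ≤ |u y| ^ p := by
      intro y hy
      have hd1 : ‖x - y‖ ≤ ρ := by
        rw [Metric.mem_ball, dist_eq_norm] at hy
        rw [← norm_neg]; simpa [neg_sub] using hy.le
      have h1 : |u x| - |u y| ≤ H * ρ ^ ν :=
        calc |u x| - |u y| ≤ |u x - u y| := abs_sub_abs_le_abs_sub _ _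
        _ ≤ H * ‖x - y‖ ^ ν := hHol x y
        _ ≤ H * ρ ^ ν :=
            mul_le_mul_of_nonneg_left (Real.rpow_le_rpow (norm_nonneg _) hd1 hν0.le) hH
      have h2 : m ≤ |u y| := max_le (by linarith) (abs_nonneg _)
      exact Real.rpow_le_rpow hm0 h2 hp0.le
    have h1 : m ^ p * (volume (Metric.ball x ρ)).toReal ≤ ∫ y in Metric.ball x ρ, |u y| ^ p :=
      setIntegral_ge_of_const_le_real measurableSet_ball measure_ball_lt_top.ne hlow
        hInt.integrableOn
    have h2 : (∫ y in Metric.ball x ρ, |u y| ^ p) ≤ I :=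
      setIntegral_le_integral hInt
        (Filter.Eventually.of_forall fun y => Real.rpow_nonneg (abs_nonneg _) _)
    rw [hVol] at h1
    linarith
  by_cases hIz : I = 0
  · -- then |u x| = 0
    have hb : ∀ ρ : ℝ, 0 < ρ → |u x| ≤ H * ρ ^ ν := by
      intro ρ hρ
      have hk := key ρ hρ
      rw [hIz] at hk
      by_contra hcon
      push_neg at hcon
      have hmp : 0 < max (|u x| - H * ρ ^ ν) 0 := lt_max_of_lt_left (by linarith)
      have : 0 < max (|u x| - H * ρ ^ ν) 0 ^ p * (ρ ^ d * κ) := by positivity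
      linarith
    have hux : |u x| = 0 := by
      by_contra h
      have hux0 : 0 < |u x| := (abs_nonneg _).lt_of_ne (Ne.symm h)
      by_cases hH0 : H = 0
      · have := hb 1 one_pos
        rw [hH0, zero_mul] at this
        linarith
      · have hHpos : 0 < H := hH.lt_of_ne (Ne.symm hH0)
        set ρ := (|u x| / (2 * H)) ^ ν⁻¹ with hρdef
        have hρ : 0 < ρ := Real.rpow_pos_of_pos (by positivity) _
        have hρν : ρ ^ ν = |u x| / (2 * H) :=
          Real.rpow_inv_rpow (by positivity) hν0.ne'
        have h2 : |u x| ≤ |u x| / 2 := by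
          calc |u x| ≤ H * ρ ^ ν := hb ρ hρ
          _ = H * (|u x| / (2 * H)) := by rw [hρν]
          _ = |u x| / 2 := by field_simp
        linarith
    rw [hux]
    positivity
  · have hIpos : 0 < I := hInn.lt_of_ne (Ne.symm hIz)
    by_cases hH0 : H = 0
    · -- u x = 0 again
      have hux : |u x| = 0 := by
        by_contra h
        have hux0 : 0 < |u x| := (abs_nonneg _).lt_of_ne (Ne.symm h)
        have huxp : 0 < |u x| ^ p := Real.rpow_pos_of_pos hux0 p
        set T := |u x| ^ p * κ with hTdef
        have hT : 0 < T := by positivity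
        set ρ := (2 * I / T) ^ ((d:ℝ)⁻¹) with hρdef
        have hρ : 0 < ρ := Real.rpow_pos_of_pos (by positivity) _
        have hρd : ρ ^ d = 2 * I / T :=
          Real.rpow_inv_natCast_pow (by positivity) (by omega)
        have hk := key ρ hρ
        rw [hH0, zero_mul, sub_zero, max_eq_left (abs_nonneg _), hρd] at hk
        have he : |u x| ^ p * (2 * I / T * κ) = 2 * I := by
          rw [hTdef]; field_simp
        linarith
      rw [hux]
      positivity
    · -- main case
      have hHpos : 0 < H := hH.lt_of_ne (Ne.symm hH0)
      set N := I ^ (1/p) with hNdef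
      have hN : 0 < N := Real.rpow_pos_of_pos hIpos _
      have hNp : N ^ p = I := by
        rw [hNdef, ← Real.rpow_mul hInn, one_div, inv_mul_cancel₀ hp0.ne', Real.rpow_one]
      set ρ := (N / H) ^ (p / D) with hρdef
      have hNH : 0 < N / H := div_pos hN hHpos
      have hρ : 0 < ρ := Real.rpow_pos_of_pos hNH _
      have hρν : ρ ^ ν = (N / H) ^ (p * ν / D) := by
        rw [hρdef, ← Real.rpow_mul hNH.le]
        congr 1; ring
      have hρd : (ρ:ℝ) ^ d = (N / H) ^ (p * d / D) := by
        rw [hρdef, ← Real.rpow_natCast ((N / H) ^ (p / D)) d, ← Real.rpow_mul hNH.le]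
        congr 1; ring
      -- claim (a)
      have ha : H * ρ ^ ν = H ^ ((d:ℝ)/D) * N ^ (p * ν / D) := by
        rw [hρν, Real.div_rpow hN.le hHpos.le,
          show ((d:ℝ)/D) = 1 - p * ν / D by field_simp; rw [hDdef]; ring,
          Real.rpow_sub hHpos, Real.rpow_one]
        ring
      set R := κ ^ (-(1/p)) * (H ^ ((d:ℝ)/D) * N ^ (p * ν / D)) with hRdef
      have hR : 0 ≤ R := by positivity
      -- claim (b) : R ^ p * (ρ ^ d * κ) = I
      have hRp : R ^ p * (ρ ^ d * κ) = I := by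
        have e1 : R ^ p = κ⁻¹ * (H ^ ((d:ℝ)/D * p) * N ^ (p * ν / D * p)) := by
          rw [hRdef, Real.mul_rpow (by positivity) (by positivity),
            Real.mul_rpow (by positivity) (by positivity),
            ← Real.rpow_mul hκpos.le, ← Real.rpow_mul hHpos.le, ← Real.rpow_mul hN.le,
            show -(1/p) * p = -1 by field_simp, Real.rpow_neg_one]
        have e2 : (ρ:ℝ) ^ d = N ^ (p * d / D) * (H ^ (p * d / D))⁻¹ := by
          rw [hρd, Real.div_rpow hN.le hHpos.le, div_eq_mul_inv]
        have e3 : H ^ ((d:ℝ)/D * p) = H ^ (p * d / D) := by congr 1; ring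
        have e4 : N ^ (p * ν / D * p) * N ^ (p * d / D) = N ^ p := by
          rw [← Real.rpow_add hN]; congr 1; field_simp; ring
        rw [e1, e2, e3]
        calc κ⁻¹ * (H ^ (p*d/D) * N ^ (p*ν/D*p)) * (N ^ (p*d/D) * (H ^ (p*d/D))⁻¹ * κ)
            = (N ^ (p*ν/D*p) * N ^ (p*d/D)) * (H ^ (p*d/D) * (H ^ (p*d/D))⁻¹) * (κ⁻¹ * κ) := by
              ring
          _ = N ^ p := by
              rw [e4, mul_inv_cancel₀ (by positivity), inv_mul_cancel₀ hκpos.ne']; ring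
          _ = I := hNp
      have hk := key ρ hρ
      have hX : 0 < ρ ^ d * κ := by positivity
      have hmRp : max (|u x| - H * ρ ^ ν) 0 ^ p ≤ R ^ p := by
        rw [← hRp] at hk
        exact le_of_mul_le_mul_right hk hX
      have hmR : max (|u x| - H * ρ ^ ν) 0 ≤ R := by
        by_contra hcon
        push_neg at hcon
        have := Real.rpow_lt_rpow hR hcon hp0
        linarith
      have hfin : |u x| ≤ H * ρ ^ ν + R := by
        have := le_max_left (|u x| - H * ρ ^ ν) 0
        linarith
      rw [ha, hRdef] at hfin
      calc |u x| ≤ H ^ ((d:ℝ)/D) * N ^ (p*ν/D) +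
            κ ^ (-(1/p)) * (H ^ ((d:ℝ)/D) * N ^ (p*ν/D)) := hfin
        _ = (1 + κ ^ (-(1/p))) * H ^ ((d:ℝ)/D) * N ^ (p*ν/D) := by ring
end

section
/- Let d ≥ 1 and m ∈ (d/(d+2), 1), and set α = 2 - d(1-m), so that α/(1-m) > 2. For a measurable function u : ℝᵈ → ℝ, define ‖u‖_{X_m} = sup_{r>0} r^{α/(1-m)} ∫_{|x|>r} |u| dx. If u ∈ L¹(ℝᵈ) and ‖u‖_{X_m} < ∞, then ∫_{ℝᵈ} |x|² |u(x)| dx ≤ ‖u‖_{L¹(ℝᵈ)} + 4 (1 - 2^{2 - α/(1-m)})^{-1} ‖u‖_{X_m}. -/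
open MeasureTheory
open scoped ENNReal

theorem stmt_15 (d : ℕ) (hd : 1 ≤ d) (m : ℝ)
    (hm1 : (d : ℝ) / (d + 2) < m) (hm2 : m < 1)
    (u : EuclideanSpace ℝ (Fin d) → ℝ) (hu : Integrable u)
    (A : ℝ)
    (hA : ∀ r > (0 : ℝ),
      r ^ ((2 - d * (1 - m)) / (1 - m)) * ∫ x in {x | r < ‖x‖}, |u x| ≤ A) :
    Integrable (fun x => ‖x‖ ^ 2 * |u x|) ∧
    ∫ x, ‖x‖ ^ 2 * |u x| ≤
      (∫ x, |u x|) + 4 * (1 - (2 : ℝ) ^ (2 - (2 - d * (1 - m)) / (1 - m)))⁻¹ * A := by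
  set β : ℝ := (2 - d * (1 - m)) / (1 - m) with hβdef
  have hm2' : (0:ℝ) < 1 - m := by linarith
  have hβ : 2 < β := by
    rw [hβdef, lt_div_iff₀ hm2']
    have hd2 : (0:ℝ) < (d:ℝ) + 2 := by positivity
    rw [div_lt_iff₀ hd2] at hm1
    nlinarith
  set r : ℝ := 2 ^ (2 - β) with hrdef
  have hr0 : (0:ℝ) < r := Real.rpow_pos_of_pos (by norm_num) _
  have hr1 : r < 1 := Real.rpow_lt_one_of_one_lt_of_neg (by norm_num) (by linarith)
  have hA0 : 0 ≤ A := by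
    have h := hA 1 one_pos
    rw [Real.one_rpow, one_mul] at h
    exact le_trans (integral_nonneg fun x => abs_nonneg _) h
  -- pointwise bound
  set F : ℕ → EuclideanSpace ℝ (Fin d) → ℝ≥0∞ :=
    fun i => Set.indicator {x | (2:ℝ)^i < ‖x‖} (fun _ => (4:ℝ≥0∞)^(i+1)) with hFdef
  have key : ∀ x : EuclideanSpace ℝ (Fin d),
      ENNReal.ofReal (‖x‖^2) ≤ 1 + ∑' i, F i x := by
    intro x
    by_cases hx : ‖x‖ ≤ 1
    · refine le_trans ?_ le_self_add
      calc ENNReal.ofReal (‖x‖^2) ≤ ENNReal.ofReal 1 :=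
            ENNReal.ofReal_le_ofReal (pow_le_one₀ (norm_nonneg x) hx)
        _ = 1 := ENNReal.ofReal_one
    · push_neg at hx
      have hex : ∃ n : ℕ, ‖x‖ ≤ 2^(n+1) := by
        obtain ⟨n, hn⟩ := pow_unbounded_of_one_lt ‖x‖ (by norm_num : (1:ℝ) < 2)
        exact ⟨n, hn.le.trans (pow_le_pow_right₀ (by norm_num) (Nat.le_succ n))⟩
      set j := Nat.find hex with hjdef
      have hj2 : ‖x‖ ≤ 2^(j+1) := Nat.find_spec hex
      have hj1 : (2:ℝ)^j < ‖x‖ := by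
        rcases Nat.eq_zero_or_pos j with h0 | hpos
        · rw [h0]; simpa using hx
        · have h := Nat.find_min hex (Nat.sub_lt hpos one_pos)
          push_neg at h
          rw [← hjdef] at h
          have hjj : j - 1 + 1 = j := by omega
          rwa [hjj] at h
      have hmem : x ∈ {y : EuclideanSpace ℝ (Fin d) | (2:ℝ)^j < ‖y‖} := hj1
      refine le_trans ?_ le_add_self
      calc ENNReal.ofReal (‖x‖^2)
          ≤ ENNReal.ofReal (((2:ℝ)^(j+1))^2) :=
            ENNReal.ofReal_le_ofReal (pow_le_pow_left₀ (norm_nonneg x) hj2 2)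
        _ = (4:ℝ≥0∞)^(j+1) := by
            rw [← pow_mul, mul_comm, pow_mul]
            norm_num
        _ = F j x := by simp only [hFdef]; exact (Set.indicator_of_mem hmem (fun _ => (4:ℝ≥0∞)^(j+1))).symm
        _ ≤ ∑' i, F i x := ENNReal.le_tsum j
  have hg : AEMeasurable (fun x => ENNReal.ofReal |u x|) volume :=
    ENNReal.measurable_ofReal.comp_aemeasurable hu.abs.aemeasurable
  have hsmeas : ∀ i : ℕ, MeasurableSet {x : EuclideanSpace ℝ (Fin d) | (2:ℝ)^i < ‖x‖} :=
    fun i => measurableSet_lt measurable_const measurable_norm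
  have hterm : ∀ i : ℕ,
      ∫⁻ x, F i x * ENNReal.ofReal |u x| ≤ ENNReal.ofReal (4 * A * r ^ i) := by
    intro i
    have h2i : (0:ℝ) < 2 ^ i := by positivity
    have hp : (0:ℝ) < ((2:ℝ)^i) ^ β := Real.rpow_pos_of_pos h2i β
    have hint : ∫ x in {x : EuclideanSpace ℝ (Fin d) | (2:ℝ)^i < ‖x‖}, |u x|
        ≤ A / ((2:ℝ)^i) ^ β := (le_div_iff₀' hp).mpr (hA ((2:ℝ)^i) h2i)
    have hreal : (4:ℝ)^(i+1) * (A / ((2:ℝ)^i) ^ β) = 4 * A * r ^ i := by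
      have hb : (0:ℝ) ≤ 2 := by norm_num
      have h4 : (4:ℝ) = (2:ℝ)^(2:ℝ) := by
        rw [show (2:ℝ) = ((2:ℕ):ℝ) from by norm_num, Real.rpow_natCast]; norm_num
      rw [hrdef, ← Real.rpow_natCast ((2:ℝ)^(2-β)) i, ← Real.rpow_mul hb,
          ← Real.rpow_natCast (2:ℝ) i, ← Real.rpow_mul hb, h4,
          ← Real.rpow_natCast ((2:ℝ)^(2:ℝ)) (i+1), ← Real.rpow_mul hb,
          div_eq_mul_inv, ← Real.rpow_neg hb, mul_comm A]
      have e : (2:ℝ) ^ (2 * ((i+1 : ℕ):ℝ)) * (2:ℝ) ^ (-((i:ℝ)*β))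
          = (2:ℝ)^(2:ℝ) * (2:ℝ)^((2-β)*(i:ℝ)) := by
        rw [← Real.rpow_add (by norm_num : (0:ℝ) < 2),
            ← Real.rpow_add (by norm_num : (0:ℝ) < 2)]
        congr 1
        push_cast
        ring
      linear_combination A * e
    calc ∫⁻ x, F i x * ENNReal.ofReal |u x|
        = ∫⁻ x, Set.indicator {x : EuclideanSpace ℝ (Fin d) | (2:ℝ)^i < ‖x‖}
            (fun x => (4:ℝ≥0∞)^(i+1) * ENNReal.ofReal |u x|) x := by
          congr 1; funext x
          simp only [hFdef]
          by_cases hx : x ∈ {x : EuclideanSpace ℝ (Fin d) | (2:ℝ)^i < ‖x‖} <;>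
            simp [Set.indicator_of_mem, Set.indicator_of_notMem, hx]
      _ = ∫⁻ x in {x : EuclideanSpace ℝ (Fin d) | (2:ℝ)^i < ‖x‖},
            (4:ℝ≥0∞)^(i+1) * ENNReal.ofReal |u x| := lintegral_indicator (hsmeas i) _
      _ = (4:ℝ≥0∞)^(i+1) * ∫⁻ x in {x : EuclideanSpace ℝ (Fin d) | (2:ℝ)^i < ‖x‖},
            ENNReal.ofReal |u x| := lintegral_const_mul' _ _ (by simp)
      _ = (4:ℝ≥0∞)^(i+1) * ENNReal.ofReal
            (∫ x in {x : EuclideanSpace ℝ (Fin d) | (2:ℝ)^i < ‖x‖}, |u x|) := by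
          rw [← ofReal_integral_eq_lintegral_ofReal hu.abs.integrableOn
            (ae_of_all _ fun x => abs_nonneg _)]
      _ ≤ (4:ℝ≥0∞)^(i+1) * ENNReal.ofReal (A / ((2:ℝ)^i) ^ β) :=
          mul_le_mul_right (ENNReal.ofReal_le_ofReal hint) _
      _ = ENNReal.ofReal (4 * A * r ^ i) := by
          rw [← hreal, ENNReal.ofReal_mul (by positivity), ENNReal.ofReal_pow (by norm_num)]
          norm_num
  have hsum : Summable (fun i : ℕ => 4 * A * r ^ i) :=
    (summable_geometric_of_lt_one hr0.le hr1).mul_left _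
  have hAr : (0:ℝ) ≤ 4 * (1-r)⁻¹ * A :=
    mul_nonneg (mul_nonneg (by norm_num) (inv_nonneg.mpr (by linarith))) hA0
  have main : ∫⁻ x, ENNReal.ofReal (‖x‖^2 * |u x|)
      ≤ ENNReal.ofReal ((∫ x, |u x|) + 4 * (1-r)⁻¹ * A) := by
    calc ∫⁻ x, ENNReal.ofReal (‖x‖^2 * |u x|)
        = ∫⁻ x, ENNReal.ofReal (‖x‖^2) * ENNReal.ofReal |u x| := by
          congr 1; funext x; rw [ENNReal.ofReal_mul (by positivity)]
      _ ≤ ∫⁻ x, (1 + ∑' i, F i x) * ENNReal.ofReal |u x| :=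
          lintegral_mono fun x => mul_le_mul_left (key x) _
      _ = ∫⁻ x, (ENNReal.ofReal |u x| + ∑' i, F i x * ENNReal.ofReal |u x|) := by
          congr 1; funext x; rw [add_mul, one_mul, ENNReal.tsum_mul_right]
      _ = (∫⁻ x, ENNReal.ofReal |u x|) + ∫⁻ x, ∑' i, F i x * ENNReal.ofReal |u x| :=
          lintegral_add_left' hg _
      _ = (∫⁻ x, ENNReal.ofReal |u x|) + ∑' i, ∫⁻ x, F i x * ENNReal.ofReal |u x| := by
          rw [lintegral_tsum fun i => by
            simp only [hFdef]
            exact ((measurable_const.indicator (hsmeas i)).aemeasurable.mul hg)]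
      _ ≤ ENNReal.ofReal (∫ x, |u x|) + ∑' i, ENNReal.ofReal (4 * A * r ^ i) := by
          gcongr with i
          · exact le_of_eq (ofReal_integral_eq_lintegral_ofReal hu.abs
              (ae_of_all _ fun x => abs_nonneg _)).symm
          · exact hterm i
      _ = ENNReal.ofReal ((∫ x, |u x|) + 4 * (1-r)⁻¹ * A) := by
          rw [← ENNReal.ofReal_tsum_of_nonneg
              (fun i => mul_nonneg (mul_nonneg (by norm_num) hA0) (pow_nonneg hr0.le i)) hsum,
            tsum_mul_left, tsum_geometric_of_lt_one hr0.le hr1,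
            ← ENNReal.ofReal_add (integral_nonneg fun x => abs_nonneg _)
              (mul_nonneg (mul_nonneg (by norm_num) hA0) (inv_nonneg.mpr (by linarith)))]
          congr 1
          ring
  have hmeasf : AEStronglyMeasurable (fun x : EuclideanSpace ℝ (Fin d) => ‖x‖^2 * |u x|) volume :=
    (continuous_norm.pow 2).aestronglyMeasurable.mul hu.abs.aestronglyMeasurable
  have hnn : 0 ≤ᵐ[volume] fun x : EuclideanSpace ℝ (Fin d) => ‖x‖^2 * |u x| :=
    ae_of_all _ fun x => by positivity
  have hfin : HasFiniteIntegral (fun x : EuclideanSpace ℝ (Fin d) => ‖x‖^2 * |u x|) volume := by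
    rw [hasFiniteIntegral_iff_ofReal hnn]
    exact lt_of_le_of_lt main ENNReal.ofReal_lt_top
  refine ⟨⟨hmeasf, hfin⟩, ?_⟩
  rw [integral_eq_lintegral_of_nonneg_ae hnn hmeasf]
  exact ENNReal.toReal_le_of_le_ofReal
    (add_nonneg (integral_nonneg fun x => abs_nonneg _) hAr) main
end
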